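/- For all integers n, N with 0 ≤ n ≤ N-1, the squared norm of the discrete Chebyshev polynomial with respect to the counting measure on {0, 1, …, N-1} is given by ∑_{x=0}^{N-1} (t_n(x,N))^2 = N(N^2 - 1^2)(N^2 - 2^2)⋯(N^2 - n^2)/(2n+1). -/

import Mathlib

open Finset

/-- Pochhammer rising factorial `(z)_k = z (z+1) ⋯ (z+k-1)`. -/
noncomputable def poch (z : ℝ) (k : ℕ) : ℝ := ∏ i ∈ Finset.range k, (z + i)

/-- Discrete Chebyshev polynomial `t_n(x, N)` for `0 ≤ n ≤ N-1`:
`t_n(x, N) = (-1)^n (N-n)_n ∑_{k=0}^n ((-n)_k (-x)_k (n+1)_k)/((-N+1)_k (k!)^2)`. -/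
noncomputable def tchebN (n N : ℕ) (x : ℝ) : ℝ :=
  (-1 : ℝ) ^ n * poch ((N : ℝ) - n) n *
    ∑ k ∈ Finset.range (n + 1),
      poch (-(n : ℝ)) k * poch (-x) k * poch ((n : ℝ) + 1) k /
        (poch (-(N : ℝ) + 1) k * ((Nat.factorial k : ℝ)) ^ 2)

section Aux
open Nat

/-- cast of descFactorial as a real product -/
lemma cast_dF_prod (m k : ℕ) :
    ((m.descFactorial k : ℕ) : ℝ) = ∏ i ∈ Finset.range k, ((m : ℝ) - i) := by
  rcases le_or_gt k m with h | h
  · rw [Nat.descFactorial_eq_prod_range]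
    push_cast
    refine Finset.prod_congr rfl fun i hi => ?_
    rw [Nat.cast_sub (le_trans (Nat.le_of_lt_succ (Nat.lt_succ_of_lt (mem_range.1 hi))) h)]
  · rw [Nat.descFactorial_eq_zero_iff_lt.2 h, Nat.cast_zero]
    exact (Finset.prod_eq_zero (mem_range.2 h) (by simp)).symm

lemma prod_sub_choose (x k : ℕ) :
    ∏ i ∈ Finset.range k, ((x : ℝ) - i) = (k ! : ℝ) * (x.choose k : ℝ) := by
  rw [← cast_dF_prod, Nat.descFactorial_eq_factorial_mul_choose]
  push_cast; ring

lemma poch_neg_nat (m k : ℕ) :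
    poch (-(m : ℝ)) k = (-1 : ℝ) ^ k * (m.descFactorial k : ℝ) := by
  rw [cast_dF_prod, poch]
  calc ∏ i ∈ range k, (-(m : ℝ) + i) = ∏ i ∈ range k, (-1 : ℝ) * ((m : ℝ) - i) :=
        Finset.prod_congr rfl fun i _ => by ring
    _ = (-1 : ℝ) ^ k * ∏ i ∈ range k, ((m : ℝ) - i) := by
        rw [Finset.prod_mul_distrib, Finset.prod_const, Finset.card_range]

lemma poch_add_one (m k : ℕ) :
    poch ((m : ℝ) + 1) k = ((m + k).descFactorial k : ℝ) := by
  have hr := Finset.prod_range_reflect (fun i => ((m + k : ℕ) : ℝ) - i) k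
  rw [cast_dF_prod, ← hr, poch]
  refine Finset.prod_congr rfl fun i hi => ?_
  have hi' := mem_range.1 hi
  have h2 : ((k - 1 - i : ℕ) : ℝ) = (k : ℝ) - 1 - i := by
    push_cast [Nat.cast_sub (by omega : i ≤ k - 1), Nat.cast_sub (by omega : 1 ≤ k)]; ring
  push_cast [h2]
  ring

lemma poch_nat_sub (a b q : ℕ) (hb : b ≤ a) :
    poch ((a : ℝ) - b) q = ((a - b + q - 1).descFactorial q : ℝ) := by
  rcases Nat.eq_zero_or_pos q with rfl | hq
  · simp [poch]
  have hr := Finset.prod_range_reflect (fun i => ((a - b + q - 1 : ℕ) : ℝ) - i) q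
  rw [cast_dF_prod, ← hr, poch]
  refine Finset.prod_congr rfl fun i hi => ?_
  have hi' := mem_range.1 hi
  have h1 : ((a - b + q - 1 : ℕ) : ℝ) = (a : ℝ) - b + q - 1 := by
    push_cast [Nat.cast_sub (by omega : 1 ≤ a - b + q), Nat.cast_sub hb]; ring
  have h2 : ((q - 1 - i : ℕ) : ℝ) = (q : ℝ) - 1 - i := by
    push_cast [Nat.cast_sub (by omega : i ≤ q - 1), Nat.cast_sub (by omega : 1 ≤ q)]; ring
  rw [h1, h2]; ring

/-- binomial-basis coefficients of the discrete Chebyshev polynomial -/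
noncomputable def cheC (n N k : ℕ) : ℝ :=
  (-1 : ℝ) ^ (n + k) *
    (((N - 1 - k).descFactorial (n - k) * (n + k).descFactorial (2 * k) : ℕ) : ℝ) / (k ! : ℝ)

lemma tcheb_expand (n N : ℕ) (hn : n + 1 ≤ N) (x : ℕ) :
    tchebN n N (x : ℝ) = ∑ k ∈ Finset.range (n + 1), cheC n N k * (x.choose k : ℝ) := by
  rw [tchebN, Finset.mul_sum]
  refine Finset.sum_congr rfl fun k hk => ?_
  have hkn : k ≤ n := Nat.lt_succ_iff.1 (mem_range.1 hk)
  -- rewrite all poch values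
  have e1 : poch ((N : ℝ) - n) n = (((N - 1).descFactorial n : ℕ) : ℝ) := by
    rw [poch_nat_sub N n n (by omega)]
    congr 2; omega
  have e2 : poch (-(n : ℝ)) k = (-1 : ℝ) ^ k * (n.descFactorial k : ℝ) := poch_neg_nat n k
  have e3 : poch (-(x : ℝ)) k = (-1 : ℝ) ^ k * (x.descFactorial k : ℝ) := poch_neg_nat x k
  have e4 : poch ((n : ℝ) + 1) k = (((n + k).descFactorial k : ℕ) : ℝ) := poch_add_one n k
  have e5 : poch (-(N : ℝ) + 1) k = (-1 : ℝ) ^ k * (((N - 1).descFactorial k : ℕ) : ℝ) := by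
    have : -(N : ℝ) + 1 = -((N - 1 : ℕ) : ℝ) := by
      push_cast [Nat.cast_sub (by omega : 1 ≤ N)]; ring
    rw [this, poch_neg_nat]
  rw [e1, e2, e3, e4, e5]
  -- descFactorial identities
  have d1 : (N - 1 - k).descFactorial (n - k) * (N - 1).descFactorial k
      = (N - 1).descFactorial n := by
    have := Nat.descFactorial_mul_descFactorial (n := N - 1) (k := k) (m := n) hkn
    simpa using this
  have d2 : x.descFactorial k = k ! * x.choose k := Nat.descFactorial_eq_factorial_mul_choose x k
  have d3 : (n + k).descFactorial (2 * k) = n.descFactorial k * (n + k).descFactorial k := by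
    have := Nat.descFactorial_mul_descFactorial (n := n + k) (k := k) (m := 2 * k)
      (by omega : k ≤ 2 * k)
    have h2 : n + k - k = n := by omega
    have h3 : 2 * k - k = k := by omega
    rw [h2, h3] at this
    rw [← this, Nat.mul_comm]
  have hNk : ((N - 1).descFactorial k : ℝ) ≠ 0 := by
    have : (N - 1).descFactorial k ≠ 0 := fun h => by have := Nat.descFactorial_eq_zero_iff_lt.1 h; omega
    exact_mod_cast this
  have hf : (k ! : ℝ) ≠ 0 := by positivity
  rw [cheC]
  rw [← d1, d2, d3]
  push_cast
  field_simp
  ring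

/-- recurrence for alternating binomial sums: `Δ^{m+1} f x = Δ^m f (x+1) - Δ^m f x` -/
lemma alt_succ (f : ℕ → ℝ) (m x : ℕ) :
    ∑ j ∈ Finset.range (m + 2), (-1 : ℝ) ^ (m + 1 - j) * ((m + 1).choose j : ℝ) * f (x + j)
      = (∑ j ∈ Finset.range (m + 1), (-1 : ℝ) ^ (m - j) * (m.choose j : ℝ) * f (x + 1 + j))
        - ∑ j ∈ Finset.range (m + 1), (-1 : ℝ) ^ (m - j) * (m.choose j : ℝ) * f (x + j) := by
  rw [Finset.sum_range_succ' (fun j => (-1 : ℝ) ^ (m + 1 - j) * ((m + 1).choose j : ℝ) * f (x + j)) (m + 1)]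
  have step : ∀ j ∈ Finset.range (m + 1),
      (-1 : ℝ) ^ (m + 1 - (j + 1)) * ((m + 1).choose (j + 1) : ℝ) * f (x + (j + 1))
      = (-1 : ℝ) ^ (m - j) * (m.choose j : ℝ) * f (x + 1 + j)
        + (-1 : ℝ) ^ (m - j) * (m.choose (j + 1) : ℝ) * f (x + 1 + j) := by
    intro j hj
    have h1 : m + 1 - (j + 1) = m - j := by omega
    have h2 : x + (j + 1) = x + 1 + j := by omega
    rw [h1, h2, Nat.choose_succ_succ]
    push_cast; ring
  rw [Finset.sum_congr rfl step, Finset.sum_add_distrib]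
  have htop : ∑ j ∈ Finset.range (m + 1), (-1 : ℝ) ^ (m - j) * (m.choose (j + 1) : ℝ) * f (x + 1 + j)
      = ∑ j ∈ Finset.range m, (-1 : ℝ) ^ (m - j) * (m.choose (j + 1) : ℝ) * f (x + 1 + j) := by
    rw [Finset.sum_range_succ]
    simp
  rw [htop]
  have hneg : -∑ j ∈ Finset.range (m + 1), (-1 : ℝ) ^ (m - j) * (m.choose j : ℝ) * f (x + j)
      = (∑ j ∈ Finset.range m, (-1 : ℝ) ^ (m - j) * (m.choose (j + 1) : ℝ) * f (x + 1 + j))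
        + (-1 : ℝ) ^ (m + 1 - 0) * ((m + 1).choose 0 : ℝ) * f (x + 0) := by
    rw [Finset.sum_range_succ' (fun j => (-1 : ℝ) ^ (m - j) * (m.choose j : ℝ) * f (x + j)) m]
    rw [neg_add]
    congr 1
    · rw [← Finset.sum_neg_distrib]
      refine Finset.sum_congr rfl fun j hj => ?_
      have hj' := Finset.mem_range.1 hj
      have h1 : m - j = (m - (j + 1)) + 1 := by omega
      have h2 : x + (j + 1) = x + 1 + j := by omega
      rw [h1, h2, pow_succ]
      ring
    · simp
      ring
  linarith [hneg]

/-- `Δ^m` applied to `x ↦ C(x,k)` -/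
lemma alt_choose (m : ℕ) : ∀ x k : ℕ,
    ∑ j ∈ Finset.range (m + 1), (-1 : ℝ) ^ (m - j) * (m.choose j : ℝ) * ((x + j).choose k : ℝ)
      = if m ≤ k then (x.choose (k - m) : ℝ) else 0 := by
  induction m with
  | zero => intro x k; simp
  | succ m ih =>
    intro x k
    rw [alt_succ (fun y => ((y).choose k : ℝ)) m x, ih (x + 1) k, ih x k]
    rcases le_or_gt (m + 1) k with h | h
    · rw [if_pos h, if_pos (by omega), if_pos (by omega)]
      have hk : k - m = (k - (m + 1)) + 1 := by omega
      rw [hk, Nat.choose_succ_succ]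
      push_cast; ring
    · rcases le_or_gt m k with h2 | h2
      · have hk : k = m := by omega
        subst hk
        simp
      · rw [if_neg (by omega), if_neg (by omega), if_neg (by omega)]
        ring

/-- the n-th finite difference of the discrete Chebyshev polynomial is constant -/
lemma alt_tcheb (n N : ℕ) (hn : n + 1 ≤ N) (x : ℕ) :
    ∑ j ∈ Finset.range (n + 1), (-1 : ℝ) ^ (n - j) * (n.choose j : ℝ) * tchebN n N ((x + j : ℕ) : ℝ)
      = ((2 * n)! : ℝ) / (n ! : ℝ) := by
  have h1 : ∀ j ∈ Finset.range (n + 1),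
      (-1 : ℝ) ^ (n - j) * (n.choose j : ℝ) * tchebN n N ((x + j : ℕ) : ℝ)
      = ∑ k ∈ Finset.range (n + 1),
          cheC n N k * ((-1 : ℝ) ^ (n - j) * (n.choose j : ℝ) * (((x + j).choose k : ℕ) : ℝ)) := by
    intro j _
    rw [tcheb_expand n N hn (x + j), Finset.mul_sum]
    exact Finset.sum_congr rfl fun k _ => by ring
  rw [Finset.sum_congr rfl h1, Finset.sum_comm]
  have h2 : ∀ k ∈ Finset.range (n + 1),
      ∑ j ∈ Finset.range (n + 1),
        cheC n N k * ((-1 : ℝ) ^ (n - j) * (n.choose j : ℝ) * (((x + j).choose k : ℕ) : ℝ))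
      = cheC n N k * (if n ≤ k then (x.choose (k - n) : ℝ) else 0) := by
    intro k _
    rw [← Finset.mul_sum, alt_choose n x k]
  rw [Finset.sum_congr rfl h2]
  -- only k = n survives
  rw [Finset.sum_eq_single n]
  · rw [if_pos le_rfl, Nat.sub_self, Nat.choose_zero_right, cheC, Nat.sub_self,
      Nat.descFactorial_zero, Nat.one_mul]
    have : (n + n).descFactorial (2 * n) = (2 * n)! := by
      rw [show n + n = 2 * n by ring, Nat.descFactorial_self]
    rw [this]
    push_cast
    rw [← two_mul, pow_mul]
    norm_num
  · intro k hk hne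
    have : ¬ n ≤ k := by
      have := Finset.mem_range.1 hk; omega
    rw [if_neg this, mul_zero]
  · intro h
    exact absurd (Finset.self_mem_range_succ n) h

noncomputable def Bp (x p : ℕ) : ℝ := ∏ i ∈ Finset.range p, ((x : ℝ) - i)
noncomputable def Gp (N x k q : ℕ) : ℝ := ∏ i ∈ Finset.range q, ((x : ℝ) + k - N - i)

lemma diff_prod (z : ℝ) (p : ℕ) :
    (∏ i ∈ Finset.range (p + 1), (z + 1 - i)) - ∏ i ∈ Finset.range (p + 1), (z - i)
      = (p + 1) * ∏ i ∈ Finset.range p, (z - i) := by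
  rw [Finset.prod_range_succ' (fun i => z + 1 - i) p, Finset.prod_range_succ]
  have : ∀ i ∈ Finset.range p, z + 1 - ((i + 1 : ℕ) : ℝ) = z - i := by
    intro i _; push_cast; ring
  rw [Finset.prod_congr rfl this]
  ring

lemma Gp_shift (N x k q : ℕ) : Gp N (x + 1) k q = Gp N x (k + 1) q := by
  refine Finset.prod_congr rfl fun i _ => ?_
  push_cast; ring

lemma Bp_diff (x p : ℕ) (hp : 1 ≤ p) :
    Bp (x + 1) p - Bp x p = p * Bp x (p - 1) := by
  obtain ⟨p', rfl⟩ : ∃ p', p = p' + 1 := ⟨p - 1, by omega⟩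
  have h1 : Bp (x + 1) (p' + 1) = ∏ i ∈ Finset.range (p' + 1), ((x : ℝ) + 1 - i) :=
    Finset.prod_congr rfl fun i _ => by push_cast; ring
  rw [h1]
  have := diff_prod (x : ℝ) p'
  rw [Bp, Bp, Nat.add_sub_cancel]
  push_cast
  linarith [this]

lemma Gp_diff (N x k q : ℕ) (hq : 1 ≤ q) :
    Gp N (x + 1) k q - Gp N x k q = q * Gp N x k (q - 1) := by
  obtain ⟨q', rfl⟩ : ∃ q', q = q' + 1 := ⟨q - 1, by omega⟩
  have h1 : Gp N (x + 1) k (q' + 1) = ∏ i ∈ Finset.range (q' + 1), ((x : ℝ) + k - N + 1 - i) :=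
    Finset.prod_congr rfl fun i _ => by push_cast; ring
  rw [h1]
  have := diff_prod ((x : ℝ) + k - N) q'
  rw [Gp, Gp, Nat.add_sub_cancel]
  have h2 : ∀ i ∈ Finset.range (q' + 1), (x : ℝ) + k - N - i = ((x : ℝ) + k - N) - i := by
    intro i _; ring
  push_cast
  have h3 : (∏ i ∈ Finset.range (q' + 1), ((x:ℝ) + k - N - i))
      = ∏ i ∈ Finset.range (q' + 1), (((x:ℝ) + k - N) - i) := rfl
  linarith [this]

/-- specialized discrete Leibniz rule -/
lemma leibniz (n N m : ℕ) (hm : m ≤ n) : ∀ x : ℕ,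
    ∑ j ∈ Finset.range (m + 1), (-1 : ℝ) ^ (m - j) * (m.choose j : ℝ) *
        (Bp (x + j) n * Gp N (x + j) 0 n)
      = ∑ k ∈ Finset.range (m + 1),
          ((m.choose k * n.descFactorial k * n.descFactorial (m - k) : ℕ) : ℝ) *
            Bp x (n - k) * Gp N x k (n - (m - k)) := by
  induction m with
  | zero => intro x; simp
  | succ m ih =>
    intro x
    rw [alt_succ (fun y => Bp y n * Gp N y 0 n) m x, ih (by omega) (x + 1), ih (by omega) x,
      ← Finset.sum_sub_distrib]
    have key : ∀ k ∈ Finset.range (m + 1),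
        ((m.choose k * n.descFactorial k * n.descFactorial (m - k) : ℕ) : ℝ) *
            Bp (x + 1) (n - k) * Gp N (x + 1) k (n - (m - k))
          - ((m.choose k * n.descFactorial k * n.descFactorial (m - k) : ℕ) : ℝ) *
            Bp x (n - k) * Gp N x k (n - (m - k))
        = ((m.choose k * n.descFactorial (k + 1) * n.descFactorial (m - k) : ℕ) : ℝ) *
            Bp x (n - (k + 1)) * Gp N x (k + 1) (n - (m - k))
          + ((m.choose k * n.descFactorial k * n.descFactorial (m - k + 1) : ℕ) : ℝ) *
            Bp x (n - k) * Gp N x k (n - (m - k) - 1) := by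
      intro k hk
      have hk' : k ≤ m := Nat.lt_succ_iff.1 (Finset.mem_range.1 hk)
      have hBd : Bp (x + 1) (n - k) - Bp x (n - k) = ((n - k : ℕ) : ℝ) * Bp x (n - k - 1) :=
        Bp_diff x (n - k) (by omega)
      have hGd : Gp N (x + 1) k (n - (m - k)) - Gp N x k (n - (m - k))
          = ((n - (m - k) : ℕ) : ℝ) * Gp N x k (n - (m - k) - 1) :=
        Gp_diff N x k (n - (m - k)) (by omega)
      have hGs : Gp N (x + 1) k (n - (m - k)) = Gp N x (k + 1) (n - (m - k)) :=
        Gp_shift N x k (n - (m - k))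
      have e1 : n.descFactorial (k + 1) = (n - k) * n.descFactorial k := Nat.descFactorial_succ n k
      have e2 : n.descFactorial (m - k + 1) = (n - (m - k)) * n.descFactorial (m - k) :=
        Nat.descFactorial_succ n (m - k)
      have e3 : n - (k + 1) = n - k - 1 := by omega
      rw [e1, e2, e3]
      rw [hGs] at hGd
      have step1 : ((m.choose k * n.descFactorial k * n.descFactorial (m - k) : ℕ) : ℝ) *
            Bp (x + 1) (n - k) * Gp N (x + 1) k (n - (m - k))
          - ((m.choose k * n.descFactorial k * n.descFactorial (m - k) : ℕ) : ℝ) *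
            Bp x (n - k) * Gp N x k (n - (m - k))
          = ((m.choose k * n.descFactorial k * n.descFactorial (m - k) : ℕ) : ℝ) *
            ((Bp (x + 1) (n - k) - Bp x (n - k)) * Gp N x (k + 1) (n - (m - k))
              + Bp x (n - k) * (Gp N x (k + 1) (n - (m - k)) - Gp N x k (n - (m - k)))) := by
        rw [hGs]; ring
      rw [step1, hBd, hGd]
      push_cast
      ring
    rw [Finset.sum_congr rfl key, Finset.sum_add_distrib]
    -- now handle the target sum
    rw [Finset.sum_range_succ' (fun k =>
      (((m + 1).choose k * n.descFactorial k * n.descFactorial (m + 1 - k) : ℕ) : ℝ) *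
        Bp x (n - k) * Gp N x k (n - (m + 1 - k))) (m + 1)]
    have pascal : ∀ k ∈ Finset.range (m + 1),
        (((m + 1).choose (k + 1) * n.descFactorial (k + 1) * n.descFactorial (m + 1 - (k + 1)) : ℕ) : ℝ) *
          Bp x (n - (k + 1)) * Gp N x (k + 1) (n - (m + 1 - (k + 1)))
        = ((m.choose k * n.descFactorial (k + 1) * n.descFactorial (m - k) : ℕ) : ℝ) *
            Bp x (n - (k + 1)) * Gp N x (k + 1) (n - (m - k))
          + ((m.choose (k + 1) * n.descFactorial (k + 1) * n.descFactorial (m - k) : ℕ) : ℝ) *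
            Bp x (n - (k + 1)) * Gp N x (k + 1) (n - (m - k)) := by
      intro k hk
      have h1 : m + 1 - (k + 1) = m - k := by omega
      rw [h1, Nat.choose_succ_succ]
      push_cast; ring
    rw [Finset.sum_congr rfl pascal, Finset.sum_add_distrib]
    -- second summand: ∑ S2 = ∑ V + T 0
    have hS2 : ∑ k ∈ Finset.range (m + 1),
          ((m.choose k * n.descFactorial k * n.descFactorial (m - k + 1) : ℕ) : ℝ) *
            Bp x (n - k) * Gp N x k (n - (m - k) - 1)
        = (∑ k ∈ Finset.range (m + 1),
            ((m.choose (k + 1) * n.descFactorial (k + 1) * n.descFactorial (m - k) : ℕ) : ℝ) *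
              Bp x (n - (k + 1)) * Gp N x (k + 1) (n - (m - k)))
          + (((m + 1).choose 0 * n.descFactorial 0 * n.descFactorial (m + 1 - 0) : ℕ) : ℝ) *
              Bp x (n - 0) * Gp N x 0 (n - (m + 1 - 0)) := by
      rw [Finset.sum_range_succ' (fun k =>
        ((m.choose k * n.descFactorial k * n.descFactorial (m - k + 1) : ℕ) : ℝ) *
          Bp x (n - k) * Gp N x k (n - (m - k) - 1)) m]
      congr 1
      · rw [Finset.sum_range_succ]
        rw [Nat.choose_succ_self, Nat.zero_mul, Nat.zero_mul, Nat.cast_zero, zero_mul, zero_mul,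
          add_zero]
        refine Finset.sum_congr rfl fun k hk => ?_
        have hk' : k < m := Finset.mem_range.1 hk
        have h1 : m - (k + 1) + 1 = m - k := by omega
        have h2 : n - (m - (k + 1)) - 1 = n - (m - k) := by omega
        rw [h1, h2]
      · have h1 : m - 0 + 1 = m + 1 - 0 := by omega
        have h2 : n - (m - 0) - 1 = n - (m + 1 - 0) := by omega
        rw [h1, h2]
        norm_num
    rw [hS2]
    ring

/-- Vandermonde's identity for falling factorials over ℝ -/
lemma vandermonde_fall (p : ℕ) : ∀ a b : ℝ,
    ∏ i ∈ Finset.range p, (a + b - i)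
      = ∑ i ∈ Finset.range (p + 1), (p.choose i : ℝ) * (∏ j ∈ Finset.range i, (a - j)) *
          ∏ j ∈ Finset.range (p - i), (b - j) := by
  induction p with
  | zero => intro a b; simp
  | succ p ih =>
    intro a b
    rw [Finset.prod_range_succ, ih a b, Finset.sum_mul]
    have step : ∀ i ∈ Finset.range (p + 1),
        (p.choose i : ℝ) * (∏ j ∈ Finset.range i, (a - j)) *
            (∏ j ∈ Finset.range (p - i), (b - j)) * (a + b - p)
        = (p.choose i : ℝ) * (∏ j ∈ Finset.range (i + 1), (a - j)) *
            (∏ j ∈ Finset.range (p - i), (b - j))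
          + (p.choose i : ℝ) * (∏ j ∈ Finset.range i, (a - j)) *
            (∏ j ∈ Finset.range (p - i + 1), (b - j)) := by
      intro i hi
      have hi' : i ≤ p := Nat.lt_succ_iff.1 (Finset.mem_range.1 hi)
      rw [Finset.prod_range_succ, Finset.prod_range_succ]
      have hc : ((p - i : ℕ) : ℝ) = (p : ℝ) - i := by
        push_cast [Nat.cast_sub hi']; ring
      have : a + b - p = (a - i) + (b - ((p - i : ℕ) : ℝ)) := by rw [hc]; ring
      rw [this]; ring
    rw [Finset.sum_congr rfl step, Finset.sum_add_distrib]
    -- target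
    rw [Finset.sum_range_succ' (fun i => ((p + 1).choose i : ℝ) *
      (∏ j ∈ Finset.range i, (a - j)) * ∏ j ∈ Finset.range (p + 1 - i), (b - j)) (p + 1)]
    have pascal : ∀ i ∈ Finset.range (p + 1),
        ((p + 1).choose (i + 1) : ℝ) * (∏ j ∈ Finset.range (i + 1), (a - j)) *
            ∏ j ∈ Finset.range (p + 1 - (i + 1)), (b - j)
        = (p.choose i : ℝ) * (∏ j ∈ Finset.range (i + 1), (a - j)) *
            ∏ j ∈ Finset.range (p - i), (b - j)
          + (p.choose (i + 1) : ℝ) * (∏ j ∈ Finset.range (i + 1), (a - j)) *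
            ∏ j ∈ Finset.range (p - i), (b - j) := by
      intro i hi
      have h1 : p + 1 - (i + 1) = p - i := by omega
      rw [h1, Nat.choose_succ_succ]
      push_cast; ring
    rw [Finset.sum_congr rfl pascal, Finset.sum_add_distrib]
    have hsecond : ∑ i ∈ Finset.range (p + 1),
          (p.choose i : ℝ) * (∏ j ∈ Finset.range i, (a - j)) *
            ∏ j ∈ Finset.range (p - i + 1), (b - j)
        = (∑ i ∈ Finset.range (p + 1), (p.choose (i + 1) : ℝ) *
            (∏ j ∈ Finset.range (i + 1), (a - j)) * ∏ j ∈ Finset.range (p - i), (b - j))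
          + ((p + 1).choose 0 : ℝ) * (∏ j ∈ Finset.range 0, (a - j)) *
            ∏ j ∈ Finset.range (p + 1 - 0), (b - j) := by
      rw [Finset.sum_range_succ' (fun i => (p.choose i : ℝ) *
        (∏ j ∈ Finset.range i, (a - j)) * ∏ j ∈ Finset.range (p - i + 1), (b - j)) p]
      congr 1
      · rw [Finset.sum_range_succ (fun i => (p.choose (i + 1) : ℝ) *
          (∏ j ∈ Finset.range (i + 1), (a - j)) * ∏ j ∈ Finset.range (p - i), (b - j)) p]
        rw [Nat.choose_succ_self]
        push_cast
        rw [zero_mul, zero_mul, add_zero]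
        refine Finset.sum_congr rfl fun i hi => ?_
        have hi' : i < p := Finset.mem_range.1 hi
        have h1 : p - (i + 1) + 1 = p - i := by omega
        rw [h1]
      · simp
    rw [hsecond]
    ring

/-- the key binomial identity `∑ C(n,m)² C(n-m,k-m) = C(n,k) C(n+k,k)` -/
lemma star_id (n k : ℕ) (hk : k ≤ n) :
    ∑ m ∈ Finset.range (k + 1), n.choose m * n.choose m * (n - m).choose (k - m)
      = n.choose k * (n + k).choose k := by
  have step : ∀ m ∈ Finset.range (k + 1),
      n.choose m * n.choose m * (n - m).choose (k - m)
        = n.choose k * (n.choose m * k.choose m) := by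
    intro m hm
    have hm' : m ≤ k := Nat.lt_succ_iff.1 (Finset.mem_range.1 hm)
    have := Nat.choose_mul (n := n) (k := k) (s := m) hm'
    calc n.choose m * n.choose m * (n - m).choose (k - m)
        = n.choose m * (n.choose m * (n - m).choose (k - m)) := by ring
      _ = n.choose m * (n.choose k * k.choose m) := by rw [← this]
      _ = n.choose k * (n.choose m * k.choose m) := by ring
  rw [Finset.sum_congr rfl step, ← Finset.mul_sum]
  congr 1
  have vdm := Nat.add_choose_eq n k k
  rw [Finset.Nat.sum_antidiagonal_eq_sum_range_succ_mk] at vdm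
  simp only at vdm
  rw [vdm]
  exact Finset.sum_congr rfl fun m hm => by
    rw [Nat.choose_symm (Nat.lt_succ_iff.1 (Finset.mem_range.1 hm))]

/-- triangle sum swap -/
lemma double_tri (n : ℕ) (F : ℕ → ℕ → ℝ) :
    ∑ k ∈ Finset.range (n + 1), ∑ i ∈ Finset.range (n - k + 1), F k (k + i)
      = ∑ t ∈ Finset.range (n + 1), ∑ k ∈ Finset.range (t + 1), F k t := by
  have h1 : ∀ k ∈ Finset.range (n + 1),
      ∑ i ∈ Finset.range (n - k + 1), F k (k + i) = ∑ t ∈ Finset.Ico k (n + 1), F k t := by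
    intro k hk
    rw [Finset.sum_Ico_eq_sum_range]
    have h : n + 1 - k = n - k + 1 := by
      have := Finset.mem_range.1 hk; omega
    rw [h]
  rw [Finset.sum_congr rfl h1]
  have h2 := Finset.sum_Ico_Ico_comm 0 (n + 1) F
  simp only [Nat.Ico_zero_eq_range] at h2
  rw [h2]

lemma leib_eq (n N x : ℕ) (hn : n + 1 ≤ N) :
    ∑ k ∈ Finset.range (n + 1),
        ((n.choose k * n.descFactorial k * n.descFactorial (n - k) : ℕ) : ℝ) *
          Bp x (n - k) * Gp N x k (n - (n - k))
      = (n ! : ℝ) * tchebN n N (x : ℝ) := by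
  -- the collected coefficient function
  set F : ℕ → ℕ → ℝ := fun k t =>
    ((n.choose k * n.descFactorial (n - k) * n.descFactorial k : ℕ) : ℝ) *
      (((n - k).choose (t - k) : ℕ) : ℝ) * (-1 : ℝ) ^ (n - t) *
      (((N - 1 - t).descFactorial (n - t) : ℕ) : ℝ) * Bp x t with hF
  -- Step A: reflect the sum
  have hrefl := Finset.sum_range_reflect (fun k =>
    ((n.choose k * n.descFactorial k * n.descFactorial (n - k) : ℕ) : ℝ) *
      Bp x (n - k) * Gp N x k (n - (n - k))) (n + 1)
  rw [← hrefl]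
  -- Step B: expand each reflected term
  have stepB : ∀ k ∈ Finset.range (n + 1),
      ((n.choose (n + 1 - 1 - k) * n.descFactorial (n + 1 - 1 - k) *
          n.descFactorial (n - (n + 1 - 1 - k)) : ℕ) : ℝ) *
        Bp x (n - (n + 1 - 1 - k)) * Gp N x (n + 1 - 1 - k) (n - (n - (n + 1 - 1 - k)))
      = ∑ i ∈ Finset.range (n - k + 1), F k (k + i) := by
    intro k hk
    have hk' : k ≤ n := Nat.lt_succ_iff.1 (Finset.mem_range.1 hk)
    have h1 : n + 1 - 1 - k = n - k := by omega
    have h2 : n - (n - k) = k := by omega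
    rw [h1, h2, Nat.choose_symm hk']
    -- expand Gp N x (n-k) (n-k) by Vandermonde
    have hG : Gp N x (n - k) (n - k)
        = ∑ i ∈ Finset.range (n - k + 1), (((n - k).choose i : ℕ) : ℝ) *
            (∏ j ∈ Finset.range i, (((x : ℝ) - k) - j)) *
            ∏ j ∈ Finset.range (n - k - i), ((((n : ℝ) - N)) - j) := by
      have hGw : Gp N x (n - k) (n - k)
          = ∏ i ∈ Finset.range (n - k), (((x : ℝ) - k) + ((n : ℝ) - N) - i) := by
        refine Finset.prod_congr rfl fun i _ => ?_
        push_cast [Nat.cast_sub hk']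
        ring
      rw [hGw, vandermonde_fall (n - k) ((x : ℝ) - k) ((n : ℝ) - N)]
    rw [hG, Finset.mul_sum]
    refine Finset.sum_congr rfl fun i hi => ?_
    have hi' : i ≤ n - k := Nat.lt_succ_iff.1 (Finset.mem_range.1 hi)
    -- convert the a-part
    have hBa : Bp x k * ∏ j ∈ Finset.range i, (((x : ℝ) - k) - j) = Bp x (k + i) := by
      rw [Bp, Bp, Finset.prod_range_add]
      congr 1
      refine Finset.prod_congr rfl fun j _ => ?_
      push_cast; ring
    -- convert the b-part
    have hDb : ∏ j ∈ Finset.range (n - k - i), (((n : ℝ) - N) - j)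
        = (-1 : ℝ) ^ (n - (k + i)) * (((N - 1 - (k + i)).descFactorial (n - (k + i)) : ℕ) : ℝ) := by
      have e1 : ∏ j ∈ Finset.range (n - k - i), (((n : ℝ) - N) - j)
          = ∏ j ∈ Finset.range (n - k - i), ((-1 : ℝ) * ((((N : ℝ) - n)) + j)) :=
        Finset.prod_congr rfl fun j _ => by ring
      rw [e1, Finset.prod_mul_distrib, Finset.prod_const, Finset.card_range]
      have e2 : (∏ j ∈ Finset.range (n - k - i), (((N : ℝ) - n) + j)) = poch ((N : ℝ) - n) (n - k - i) := rfl
      rw [e2, poch_nat_sub N n (n - k - i) (by omega)]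
      have e3 : N - n + (n - k - i) - 1 = N - 1 - (k + i) := by omega
      have e4 : n - k - i = n - (k + i) := by omega
      rw [e3, e4]
    have e5 : (k + i) - k = i := by omega
    rw [hF]
    simp only [e5]
    rw [← hBa, hDb]
    push_cast
    ring
  rw [Finset.sum_congr rfl stepB, double_tri n F]
  -- Step D: evaluate the inner sums
  have stepD : ∀ t ∈ Finset.range (n + 1),
      ∑ k ∈ Finset.range (t + 1), F k t
      = (-1 : ℝ) ^ (n - t) * (((N - 1 - t).descFactorial (n - t) : ℕ) : ℝ) * Bp x t *
          ((n ! * (n.choose t * (n + t).choose t) : ℕ) : ℝ) := by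
    intro t ht
    have ht' : t ≤ n := Nat.lt_succ_iff.1 (Finset.mem_range.1 ht)
    have hterm : ∀ k ∈ Finset.range (t + 1), F k t
        = (-1 : ℝ) ^ (n - t) * (((N - 1 - t).descFactorial (n - t) : ℕ) : ℝ) * Bp x t *
            ((n ! * (n.choose k * n.choose k * (n - k).choose (t - k)) : ℕ) : ℝ) := by
      intro k hk
      have hk' : k ≤ t := Nat.lt_succ_iff.1 (Finset.mem_range.1 hk)
      have hcoe : n.choose k * n.descFactorial (n - k) * n.descFactorial k
          = n ! * (n.choose k * n.choose k) := by
        rw [Nat.descFactorial_eq_factorial_mul_choose n (n - k),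
          Nat.descFactorial_eq_factorial_mul_choose n k,
          Nat.choose_symm (by omega : k ≤ n)]
        rw [← Nat.choose_mul_factorial_mul_factorial (by omega : k ≤ n)]
        ring
      rw [hF]
      simp only [hcoe]
      push_cast
      ring
    rw [Finset.sum_congr rfl hterm, ← Finset.mul_sum, ← Nat.cast_sum, ← Finset.mul_sum,
      star_id n t ht']
  rw [Finset.sum_congr rfl stepD, tcheb_expand n N hn x, Finset.mul_sum]
  -- Step E: termwise comparison
  refine Finset.sum_congr rfl fun t ht => ?_
  have ht' : t ≤ n := Nat.lt_succ_iff.1 (Finset.mem_range.1 ht)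
  have hBp : Bp x t = (t ! : ℝ) * (x.choose t : ℝ) := prod_sub_choose x t
  have hdF2 : (n + t).descFactorial (2 * t) = (t ! * (n + t).choose t) * (t ! * n.choose t) := by
    have := Nat.descFactorial_mul_descFactorial (n := n + t) (k := t) (m := 2 * t)
      (by omega : t ≤ 2 * t)
    have h2 : n + t - t = n := by omega
    have h3 : 2 * t - t = t := by omega
    rw [h2, h3] at this
    rw [← this, Nat.descFactorial_eq_factorial_mul_choose,
      Nat.descFactorial_eq_factorial_mul_choose]
    ring
  have hsign : (-1 : ℝ) ^ (n + t) = (-1 : ℝ) ^ (n - t) := by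
    rw [show n + t = (n - t) + 2 * t by omega, pow_add, pow_mul]
    norm_num
  rw [cheC, hBp, hdF2, hsign]
  have hfac : (t ! : ℝ) ≠ 0 := by positivity
  field_simp
  push_cast
  ring

lemma Bp_zero (y p : ℕ) (h : y < p) : Bp y p = 0 :=
  Finset.prod_eq_zero (Finset.mem_range.2 h) (by simp)

lemma Gp_zero (N y n : ℕ) (h1 : N ≤ y) (h2 : y < N + n) : Gp N y 0 n = 0 := by
  refine Finset.prod_eq_zero (i := y - N) (Finset.mem_range.2 (by omega)) ?_
  push_cast [Nat.cast_sub h1]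
  ring

lemma w_eq_choose (n N y : ℕ) (hn : 1 ≤ N) (hy : y ≤ N + n - 1) :
    Bp y n * Gp N y 0 n
      = (-1 : ℝ) ^ n * ((n ! : ℝ) * (y.choose n : ℝ)) *
          ((n ! : ℝ) * (((N + n - 1 - y).choose n : ℕ) : ℝ)) := by
  have hB : Bp y n = (n ! : ℝ) * (y.choose n : ℝ) := prod_sub_choose y n
  have hr := Finset.prod_range_reflect (fun i => ((N + n - 1 - y : ℕ) : ℝ) - i) n
  have hG : Gp N y 0 n = (-1 : ℝ) ^ n * ((n ! : ℝ) * (((N + n - 1 - y).choose n : ℕ) : ℝ)) := by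
    rw [← prod_sub_choose (N + n - 1 - y) n, ← hr]
    calc Gp N y 0 n
        = ∏ i ∈ Finset.range n, (-1 : ℝ) *
            (((N + n - 1 - y : ℕ) : ℝ) - ((n - 1 - i : ℕ) : ℝ)) := by
          refine Finset.prod_congr rfl fun i hi => ?_
          have hi' : i < n := Finset.mem_range.1 hi
          have c1 : ((N + n - 1 - y : ℕ) : ℝ) = (N : ℝ) + n - 1 - y := by
            push_cast [Nat.cast_sub (by omega : y ≤ N + n - 1),
              Nat.cast_sub (by omega : 1 ≤ N + n)]
            ring
          have c2 : ((n - 1 - i : ℕ) : ℝ) = (n : ℝ) - 1 - i := by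
            push_cast [Nat.cast_sub (by omega : i ≤ n - 1), Nat.cast_sub (by omega : 1 ≤ n)]
            ring
          rw [c1, c2]; push_cast; ring
      _ = (-1 : ℝ) ^ n * ∏ i ∈ Finset.range n,
            (((N + n - 1 - y : ℕ) : ℝ) - ((n - 1 - i : ℕ) : ℝ)) := by
          rw [Finset.prod_mul_distrib, Finset.prod_const, Finset.card_range]
  rw [hB, hG]; ring

/-- dual Vandermonde / hockey-stick convolution -/
lemma hockey (b M : ℕ) : ∀ a : ℕ,
    ∑ y ∈ Finset.range (M + 1), y.choose a * (M - y).choose b = (M + 1).choose (a + b + 1) := by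
  induction M with
  | zero =>
    intro a
    rw [Finset.sum_range_one]
    rcases a with _ | a
    · rcases b with _ | b
      · simp
      · rw [Nat.choose_zero_succ, Nat.choose_eq_zero_of_lt (show 1 < 0 + (b + 1) + 1 by omega)]
        simp
    · rw [Nat.choose_zero_succ, Nat.choose_eq_zero_of_lt (show 1 < a + 1 + b + 1 by omega)]
      simp
  | succ M ihM =>
    intro a
    rw [Finset.sum_range_succ' (fun y => y.choose a * (M + 1 - y).choose b) (M + 1)]
    have hshift : ∀ y ∈ Finset.range (M + 1),
        (y + 1).choose a * (M + 1 - (y + 1)).choose b = (y + 1).choose a * (M - y).choose b := by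
      intro y _
      congr 2
      omega
    rw [Finset.sum_congr rfl hshift]
    rcases a with _ | s
    · have e1 : ∀ y ∈ Finset.range (M + 1),
          (y + 1).choose 0 * (M - y).choose b = y.choose 0 * (M - y).choose b := by
        intro y _; simp
      rw [Finset.sum_congr rfl e1, ihM 0]
      have pas := Nat.choose_succ_succ (M + 1) b
      simp only [Nat.choose_zero_right, Nat.one_mul, Nat.zero_add, Nat.sub_zero,
        Nat.succ_eq_add_one] at *
      omega
    · have hsplit : ∀ y ∈ Finset.range (M + 1),
          (y + 1).choose (s + 1) * (M - y).choose b
          = y.choose s * (M - y).choose b + y.choose (s + 1) * (M - y).choose b := by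
        intro y _
        rw [Nat.choose_succ_succ]
        ring
      rw [Finset.sum_congr rfl hsplit, Finset.sum_add_distrib, ihM s, ihM (s + 1)]
      have pas := Nat.choose_succ_succ (M + 1) (s + b + 1)
      have h0 : Nat.choose 0 (s + 1) = 0 := Nat.choose_zero_succ s
      rw [h0, Nat.zero_mul, Nat.add_zero]
      have e2 : s + 1 + b + 1 = s + b + 1 + 1 := by omega
      rw [e2]
      simp only [Nat.succ_eq_add_one] at pas
      omega

lemma prod_shift (n : ℕ) : ∀ z : ℝ,
    ∏ i ∈ Finset.range (2 * n + 1), (z + n - i)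
      = z * ∏ j ∈ Finset.range n, (z ^ 2 - ((j : ℝ) + 1) ^ 2) := by
  induction n with
  | zero => intro z; simp
  | succ n ih =>
    intro z
    have h1 : 2 * (n + 1) + 1 = (2 * n + 1) + 1 + 1 := by ring
    rw [h1, Finset.prod_range_succ, Finset.prod_range_succ']
    have h2 : ∀ i ∈ Finset.range (2 * n + 1),
        z + ((n + 1 : ℕ) : ℝ) - ((i + 1 : ℕ) : ℝ) = z + (n : ℝ) - i := by
      intro i _; push_cast; ring
    rw [Finset.prod_congr rfl h2, ih z, Finset.prod_range_succ]
    push_cast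
    ring

/-- Squared norm of the discrete Chebyshev polynomial:
`∑_{x=0}^{N-1} (t_n(x,N))^2 = N (N²-1²)(N²-2²)⋯(N²-n²)/(2n+1)`. -/
theorem tchebN_norm_sq (n N : ℕ) (hn : n + 1 ≤ N) :
    ∑ x ∈ Finset.range N, (tchebN n N (x : ℝ)) ^ 2 =
      (N : ℝ) * (∏ j ∈ Finset.range n, ((N : ℝ) ^ 2 - ((j : ℝ) + 1) ^ 2)) /
        (2 * (n : ℝ) + 1) := by
  have rep : ∀ x : ℕ,
      ∑ j ∈ Finset.range (n + 1), (-1 : ℝ) ^ (n - j) * (n.choose j : ℝ) *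
          (Bp (x + j) n * Gp N (x + j) 0 n)
        = (n ! : ℝ) * tchebN n N (x : ℝ) :=
    fun x => (leibniz n N n le_rfl x).trans (leib_eq n N x hn)
  -- Step 2: multiply the norm by n! and insert the representation
  have key1 : (n ! : ℝ) * ∑ x ∈ Finset.range N, (tchebN n N (x : ℝ)) ^ 2
      = ∑ j ∈ Finset.range (n + 1), ∑ x ∈ Finset.range N,
          (-1 : ℝ) ^ (n - j) * (n.choose j : ℝ) *
            (tchebN n N (x : ℝ) * (Bp (x + j) n * Gp N (x + j) 0 n)) := by
    rw [Finset.mul_sum, Finset.sum_comm]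
    refine Finset.sum_congr rfl fun x _ => ?_
    calc (n ! : ℝ) * (tchebN n N (x : ℝ)) ^ 2
        = tchebN n N (x : ℝ) * ((n ! : ℝ) * tchebN n N (x : ℝ)) := by ring
      _ = tchebN n N (x : ℝ) * ∑ j ∈ Finset.range (n + 1),
            (-1 : ℝ) ^ (n - j) * (n.choose j : ℝ) * (Bp (x + j) n * Gp N (x + j) 0 n) := by
          rw [rep x]
      _ = _ := by
          rw [Finset.mul_sum]
          exact Finset.sum_congr rfl fun j _ => by ring
  -- Step 3: reindex inner sums using the support of w
  have key2 : ∀ j ∈ Finset.range (n + 1),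
      ∑ x ∈ Finset.range N,
          (-1 : ℝ) ^ (n - j) * (n.choose j : ℝ) *
            (tchebN n N (x : ℝ) * (Bp (x + j) n * Gp N (x + j) 0 n))
      = ∑ y ∈ Finset.Ico n N,
          (-1 : ℝ) ^ (n - j) * (n.choose j : ℝ) *
            (tchebN n N ((y - j : ℕ) : ℝ) * (Bp y n * Gp N y 0 n)) := by
    intro j hj
    have hj' : j ≤ n := Nat.lt_succ_iff.1 (Finset.mem_range.1 hj)
    have sub : Finset.Ico (n - j) (N - j) ⊆ Finset.range N := by
      intro x hx
      have := Finset.mem_Ico.1 hx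
      exact Finset.mem_range.2 (by omega)
    have hvan : ∀ x ∈ Finset.range N, x ∉ Finset.Ico (n - j) (N - j) →
        (-1 : ℝ) ^ (n - j) * (n.choose j : ℝ) *
          (tchebN n N (x : ℝ) * (Bp (x + j) n * Gp N (x + j) 0 n)) = 0 := by
      intro x hx hnx
      have hxN := Finset.mem_range.1 hx
      simp only [Finset.mem_Ico, not_and_or, not_le, not_lt] at hnx
      rcases hnx with h | h
      · rw [Bp_zero (x + j) n (by omega)]
        ring
      · rw [Gp_zero N (x + j) n (by omega) (by omega)]
        ring
    rw [← Finset.sum_subset sub hvan]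
    have hmap : Finset.Ico n N = Finset.map (addRightEmbedding j) (Finset.Ico (n - j) (N - j)) := by
      rw [Finset.map_add_right_Ico]
      congr 1 <;> omega
    rw [hmap, Finset.sum_map]
    refine Finset.sum_congr rfl fun x hx => ?_
    simp only [addRightEmbedding_apply]
    rw [Nat.add_sub_cancel]
  rw [Finset.sum_congr rfl key2] at key1
  -- Step 4: swap sums and evaluate the inner alternating sum
  rw [Finset.sum_comm] at key1
  have key3 : ∀ y ∈ Finset.Ico n N,
      ∑ j ∈ Finset.range (n + 1),
          (-1 : ℝ) ^ (n - j) * (n.choose j : ℝ) *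
            (tchebN n N ((y - j : ℕ) : ℝ) * (Bp y n * Gp N y 0 n))
      = (Bp y n * Gp N y 0 n) * ((-1 : ℝ) ^ n * ((2 * n)! : ℝ) / (n ! : ℝ)) := by
    intro y hy
    have hy' := Finset.mem_Ico.1 hy
    have pull : ∀ j ∈ Finset.range (n + 1),
        (-1 : ℝ) ^ (n - j) * (n.choose j : ℝ) *
            (tchebN n N ((y - j : ℕ) : ℝ) * (Bp y n * Gp N y 0 n))
        = (Bp y n * Gp N y 0 n) *
            ((-1 : ℝ) ^ (n - j) * (n.choose j : ℝ) * tchebN n N ((y - j : ℕ) : ℝ)) := by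
      intro j _; ring
    rw [Finset.sum_congr rfl pull, ← Finset.mul_sum]
    congr 1
    -- reflect the alternating sum
    have hrefl := Finset.sum_range_reflect (fun j =>
      (-1 : ℝ) ^ (n - j) * (n.choose j : ℝ) * tchebN n N ((y - j : ℕ) : ℝ)) (n + 1)
    rw [← hrefl]
    have hterm : ∀ j ∈ Finset.range (n + 1),
        (-1 : ℝ) ^ (n - (n + 1 - 1 - j)) * (n.choose (n + 1 - 1 - j) : ℝ) *
            tchebN n N ((y - (n + 1 - 1 - j) : ℕ) : ℝ)
        = (-1 : ℝ) ^ n * ((-1 : ℝ) ^ (n - j) * (n.choose j : ℝ) *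
            tchebN n N (((y - n) + j : ℕ) : ℝ)) := by
      intro j hjr
      have hj' : j ≤ n := Nat.lt_succ_iff.1 (Finset.mem_range.1 hjr)
      have e1 : n + 1 - 1 - j = n - j := by omega
      have e2 : n - (n - j) = j := by omega
      have e3 : y - (n - j) = (y - n) + j := by omega
      rw [e1, e2, e3, Nat.choose_symm hj']
      have hs : (-1 : ℝ) ^ n = (-1 : ℝ) ^ (n - j) * (-1 : ℝ) ^ j := by
        rw [← pow_add]
        congr 1
        omega
      have h2 : (-1 : ℝ) ^ (n - j) * (-1 : ℝ) ^ (n - j) = 1 := by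
        rw [← pow_add, show (n - j) + (n - j) = 2 * (n - j) by ring, pow_mul]
        norm_num
      calc (-1 : ℝ) ^ j * (n.choose j : ℝ) * tchebN n N (((y - n) + j : ℕ) : ℝ)
          = ((-1 : ℝ) ^ (n - j) * (-1 : ℝ) ^ (n - j)) * ((-1 : ℝ) ^ j * (n.choose j : ℝ) *
              tchebN n N (((y - n) + j : ℕ) : ℝ)) := by rw [h2]; ring
        _ = ((-1 : ℝ) ^ (n - j) * (-1 : ℝ) ^ j) * ((-1 : ℝ) ^ (n - j) * (n.choose j : ℝ) *
              tchebN n N (((y - n) + j : ℕ) : ℝ)) := by ring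
        _ = _ := by rw [← hs]
    rw [Finset.sum_congr rfl hterm, ← Finset.mul_sum, alt_tcheb n N hn (y - n)]
    ring
  rw [Finset.sum_congr rfl key3] at key1
  -- Step 5: sum of w over the support
  have hWsum : ∑ y ∈ Finset.Ico n N, (Bp y n * Gp N y 0 n)
      = (-1 : ℝ) ^ n * (n ! : ℝ) ^ 2 * (((N + n).choose (2 * n + 1) : ℕ) : ℝ) := by
    have e : ∀ y ∈ Finset.Ico n N, Bp y n * Gp N y 0 n
        = (-1 : ℝ) ^ n * (n ! : ℝ) ^ 2 *
            ((y.choose n * (N + n - 1 - y).choose n : ℕ) : ℝ) := by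
      intro y hy
      have hy' := Finset.mem_Ico.1 hy
      rw [w_eq_choose n N y (by omega) (by omega)]
      push_cast
      ring
    rw [Finset.sum_congr rfl e, ← Finset.mul_sum, ← Nat.cast_sum]
    congr 2
    have sub2 : Finset.Ico n N ⊆ Finset.range (N + n - 1 + 1) := by
      intro y hy
      have := Finset.mem_Ico.1 hy
      exact Finset.mem_range.2 (by omega)
    have hvan2 : ∀ y ∈ Finset.range (N + n - 1 + 1), y ∉ Finset.Ico n N →
        y.choose n * (N + n - 1 - y).choose n = 0 := by
      intro y hyr hny
      have hyr' := Finset.mem_range.1 hyr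
      simp only [Finset.mem_Ico, not_and_or, not_le, not_lt] at hny
      rcases hny with h | h
      · rw [Nat.choose_eq_zero_of_lt h, Nat.zero_mul]
      · rw [Nat.choose_eq_zero_of_lt (show N + n - 1 - y < n by omega), Nat.mul_zero]
    rw [Finset.sum_subset sub2 hvan2]
    have hh := hockey n (N + n - 1) n
    have e2 : ∀ y ∈ Finset.range (N + n - 1 + 1),
        y.choose n * (N + n - 1 - y).choose n = y.choose n * ((N + n - 1) - y).choose n := by
      intro y _; rfl
    rw [Finset.sum_congr rfl e2, hh]
    congr 1 <;> omega
  rw [← Finset.sum_mul, hWsum] at key1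
  -- Step 6: conclude
  have hfacn : (n ! : ℝ) ≠ 0 := by positivity
  have hS : ∑ x ∈ Finset.range N, (tchebN n N (x : ℝ)) ^ 2
      = ((2 * n)! : ℝ) * (((N + n).choose (2 * n + 1) : ℕ) : ℝ) := by
    apply mul_left_cancel₀ hfacn
    rw [key1]
    have h2 : (-1 : ℝ) ^ n * (-1 : ℝ) ^ n = 1 := by
      rw [← pow_add, show n + n = 2 * n by ring, pow_mul]
      norm_num
    rw [mul_div_assoc', div_eq_iff hfacn]
    calc (-1:ℝ) ^ n * (n ! : ℝ) ^ 2 * (((N + n).choose (2 * n + 1) : ℕ) : ℝ) *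
          ((-1:ℝ) ^ n * ((2 * n)! : ℝ))
        = ((-1:ℝ) ^ n * (-1:ℝ) ^ n) * ((n ! : ℝ) ^ 2 * (((N + n).choose (2 * n + 1) : ℕ) : ℝ) *
            ((2 * n)! : ℝ)) := by ring
      _ = (n ! : ℝ) ^ 2 * (((N + n).choose (2 * n + 1) : ℕ) : ℝ) * ((2 * n)! : ℝ) := by
          rw [h2]; ring
      _ = (n ! : ℝ) * (((2 * n)!:ℝ) * (((N + n).choose (2 * n + 1) : ℕ) : ℝ)) * (n ! : ℝ) := by
          ring
  rw [hS]
  -- express the RHS via the descending factorial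
  have hdF : (((N + n).descFactorial (2 * n + 1) : ℕ) : ℝ)
      = (N : ℝ) * ∏ j ∈ Finset.range n, ((N : ℝ) ^ 2 - ((j : ℝ) + 1) ^ 2) := by
    rw [cast_dF_prod]
    have e : ∀ i ∈ Finset.range (2 * n + 1), ((N + n : ℕ) : ℝ) - i = (N : ℝ) + n - i := by
      intro i _; push_cast; ring
    rw [Finset.prod_congr rfl e, prod_shift n (N : ℝ)]
  have hfac2 : ((N + n).descFactorial (2 * n + 1) : ℕ)
      = (2 * n + 1)! * (N + n).choose (2 * n + 1) :=
    Nat.descFactorial_eq_factorial_mul_choose (N + n) (2 * n + 1)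
  have hfs : ((2 * n + 1)! : ℕ) = (2 * n + 1) * (2 * n)! := Nat.factorial_succ (2 * n)
  have h2n1 : (2 * (n : ℝ) + 1) ≠ 0 := by positivity
  rw [eq_div_iff h2n1, ← hdF]
  rw [hfac2, hfs]
  push_cast
  ring

end Aux
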